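/- Let $(E, \mathcal{N})$ be a convex geometry on a finite set, let $h$ be the maximum size of a free convex set, and let $p \geq q \geq h$ be integers with $(h-2)p < (h-1)(q-1)$. If $\mathcal{F} \subseteq \mathcal{N}$ is a family of $n \geq p$ nonempty convex sets with the $(p,q)$-property, then there exist $p-q+1$ elements of $E$ stabbing $\mathcal{F}$. -/

import Mathlib

/-!
Helly's theorem (Edelman–Jamison) comes from turning a critical family, one with empty
intersection all of whose proper subfamilies intersect, into a free convex set with one point
per member.

For the `(p, q)` bound, induct on `p`. Rank the points of `E` along a maximal chain of convex
sets and pick `h - 1` members `G` of `F` whose intersection has the latest possible first point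
`v`; by Helly, every subfamily containing `G` with a common point contains `v`. Let `F'` be the
members of `F` missing `v`. Complete `G` to `p` members by members of `F'` (and others, if `F'`
is small): the `q` of them with a common point include a member of `F'`, so they cannot contain
all of `G`, and more than `q - h + 1` of them lie outside `G`. Thus either `F'` has the
`(p - h + 1, q - h + 2)`-property and induction applies, or all but fewer than `p - q` members
of `F'` share a point, or `F'` has at most `p - q` members. Together with `v`, `p - q + 1`
points then pierce `F`.
-/

/-- Closure operator of a set family: intersection of all members containing `A`. -/
def cgClosure {E : Type*} (N : Set (Set E)) (A : Set E) : Set E :=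
  ⋂₀ {X | X ∈ N ∧ A ⊆ X}

/-- A convex geometry on `E`. -/
structure IsConvexGeometry {E : Type*} (N : Set (Set E)) : Prop where
  empty_mem : ∅ ∈ N
  univ_mem : Set.univ ∈ N
  inter_mem : ∀ X ∈ N, ∀ Y ∈ N, X ∩ Y ∈ N
  anti_exchange : ∀ (X : Set E) (y z : E), y ≠ z →
    y ∉ cgClosure N X → z ∉ cgClosure N X →
    z ∈ cgClosure N (X ∪ {y}) → y ∉ cgClosure N (X ∪ {z})

/-- A set is free if all its points are extreme in it. -/
def IsFree {E : Type*} (N : Set (Set E)) (X : Set E) : Prop :=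
  ∀ x ∈ X, x ∉ cgClosure N (X \ {x})

open Set Function

section

variable {E : Type*} {N : Set (Set E)}

theorem subset_cgClosure (A : Set E) : A ⊆ cgClosure N A :=
  fun _ ha => mem_sInter.2 fun _ hX => hX.2 ha

theorem cgClosure_subset {A X : Set E} (hX : X ∈ N) (hAX : A ⊆ X) : cgClosure N A ⊆ X :=
  sInter_subset_of_mem ⟨hX, hAX⟩

end

namespace IsConvexGeometry

variable {E : Type*} {N : Set (Set E)}

theorem sInter_mem (hN : IsConvexGeometry N) {𝒮 : Set (Set E)} (h𝒮 : 𝒮.Finite)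
    (hsub : 𝒮 ⊆ N) : ⋂₀ 𝒮 ∈ N := by
  induction 𝒮, h𝒮 using Set.Finite.induction_on with
  | empty => simpa using hN.univ_mem
  | insert _ _ ih =>
    rw [sInter_insert]
    exact hN.inter_mem _ (hsub (mem_insert _ _)) _ (ih ((subset_insert _ _).trans hsub))

theorem iInter_mem (hN : IsConvexGeometry N) {ι : Type*} [Finite ι] {T : ι → Set E}
    (hT : ∀ i, T i ∈ N) : ⋂ i, T i ∈ N := by
  rw [← sInter_range]
  exact hN.sInter_mem (finite_range T) (range_subset_iff.2 hT)

variable [Finite E]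

theorem cgClosure_mem (hN : IsConvexGeometry N) (A : Set E) : cgClosure N A ∈ N :=
  hN.sInter_mem (toFinite _) fun _ hX => hX.1

/-- A proper convex set has a convex one-point extension: a minimal convex proper superset
`D` of `X` is the closure of `X ∪ {y}` for each of its new points `y`, so by anti-exchange
it has only one new point. -/
theorem exists_insert_mem (hN : IsConvexGeometry N) {X : Set E} (hX : X ∈ N)
    (hXu : X ≠ univ) : ∃ y ∉ X, insert y X ∈ N := by
  obtain ⟨D, hmin⟩ := (toFinite {D | D ∈ N ∧ X ⊂ D}).exists_minimal
    ⟨univ, hN.univ_mem, ssubset_univ_iff.2 hXu⟩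
  obtain ⟨hD, hXD⟩ := hmin.prop
  have hclosure : ∀ y ∈ D \ X, cgClosure N (X ∪ {y}) = D := fun y hy =>
    hmin.eq_of_le ⟨hN.cgClosure_mem _, (subset_union_left.trans (subset_cgClosure _)).ssubset_of_ne
      fun h => hy.2 (h ▸ subset_cgClosure _ (mem_union_right _ rfl))⟩
      (cgClosure_subset hD (union_subset hXD.subset (singleton_subset_iff.2 hy.1)))
  obtain ⟨y, hy⟩ := exists_of_ssubset hXD
  have hyD : D = insert y X := by
    refine Subset.antisymm (fun z hz => ?_) (insert_subset hy.1 hXD.subset)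
    by_contra hz'
    obtain ⟨hzy, hzX⟩ : z ≠ y ∧ z ∉ X := by simpa only [mem_insert_iff, not_or] using hz'
    have hnot : ∀ {w}, w ∉ X → w ∉ cgClosure N X := fun hw h => hw (cgClosure_subset hX le_rfl h)
    refine hN.anti_exchange X y z (Ne.symm hzy) (hnot hy.2) (hnot hzX) ?_ ?_
    · rw [hclosure y ⟨hy.1, hy.2⟩]; exact hz
    · rw [hclosure z ⟨hz, hzX⟩]; exact hy.1
  exact ⟨y, hy.2, hyD ▸ hD⟩

theorem exists_rank_of_mem (hN : IsConvexGeometry N) {X : Set E} (hX : X ∈ N) :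
    ∃ r : E → ℕ, InjOn r Xᶜ ∧ ∀ k, X ∪ {x | r x < k} ∈ N := by
  classical
  induction hn : Xᶜ.ncard generalizing X with
  | zero =>
    obtain rfl : X = univ := compl_empty_iff.1 ((ncard_eq_zero (toFinite _)).1 hn)
    exact ⟨0, by simp, fun _ => by simpa using hN.univ_mem⟩
  | succ n ih =>
    have hXu : X ≠ univ := fun h => by simp [h] at hn
    obtain ⟨y, hyX, hyN⟩ := hN.exists_insert_mem hX hXu
    have hcard : (insert y X)ᶜ.ncard = n := by
      have : (insert y X)ᶜ = Xᶜ \ {y} := by ext; simp [and_comm]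
      rw [this, ncard_sdiff_singleton_of_mem (mem_compl hyX), hn, Nat.add_sub_cancel]
    obtain ⟨r, hr_inj, hr⟩ := ih hyN hcard
    refine ⟨fun x => if x = y then 0 else r x + 1, fun a ha b hb hab => ?_, fun k => ?_⟩
    · by_cases hay : a = y <;> by_cases hby : b = y <;>
        simp only [hay, hby, if_true, if_false] at hab
      · exact hay.trans hby.symm
      · omega
      · omega
      · exact hr_inj (by simpa [hay] using ha) (by simpa [hby] using hb) (Nat.succ_injective hab)
    · cases k with
      | zero => simpa using hX
      | succ k =>
        convert hr k using 1
        ext x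
        by_cases hxy : x = y <;> simp [hxy]

theorem exists_injective_rank (hN : IsConvexGeometry N) :
    ∃ r : E → ℕ, Injective r ∧ ∀ k, {x | r x < k} ∈ N := by
  obtain ⟨r, hr_inj, hr⟩ := hN.exists_rank_of_mem hN.empty_mem
  exact ⟨r, injOn_univ.1 (by simpa using hr_inj), fun k => by simpa using hr k⟩

end IsConvexGeometry

structure IsCriticalFamily {E ι : Type*} (N : Set (Set E)) (T : ι → Set E) : Prop where
  mem : ∀ i, T i ∈ N
  iInter_eq_empty : ⋂ i, T i = ∅
  iInter_ne_nonempty : ∀ i, (⋂ (j) (_ : j ≠ i), T j).Nonempty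

namespace IsCriticalFamily

variable {E ι : Type*} {N : Set (Set E)} {T : ι → Set E}

theorem update [DecidableEq ι] (hT : IsCriticalFamily N T) {i : ι} {M : Set E}
    (hM : M ∈ N) (hTM : T i ⊆ M) (hdisj : M ∩ ⋂ (j) (_ : j ≠ i), T j = ∅) :
    IsCriticalFamily N (Function.update T i M) := by
  have hle : ∀ j, T j ⊆ Function.update T i M j := fun j => by
    rcases eq_or_ne j i with rfl | hj
    · simpa using hTM
    · simp [hj]
  refine ⟨fun j => ?_, ?_, fun j => (hT.iInter_ne_nonempty j).mono ?_⟩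
  · rcases eq_or_ne j i with rfl | hj
    · simpa using hM
    · simpa [hj] using hT.mem j
  · refine eq_empty_of_subset_empty (hdisj ▸ fun x hx => ⟨?_, ?_⟩)
    · simpa using mem_iInter.1 hx i
    · simp only [mem_iInter]
      intro j hj
      simpa [hj] using mem_iInter.1 hx j
  · exact iInter₂_mono fun l _ => hle l

theorem exists_saturated [Finite E] [Fintype ι] (hT : IsCriticalFamily N T) :
    ∃ T' : ι → Set E, IsCriticalFamily N T' ∧
      ∀ i, ∀ M ∈ N, T' i ⊂ M → (M ∩ ⋂ (j) (_ : j ≠ i), T' j).Nonempty := by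
  classical
  obtain ⟨T', hT', hmax⟩ := exists_max_image {T | IsCriticalFamily N T}
    (fun T => ∑ i, (T i).ncard) (toFinite _) ⟨T, hT⟩
  refine ⟨T', hT', fun i M hM hTM => nonempty_iff_ne_empty.2 fun hdisj => ?_⟩
  have hlt : ∑ j, (T' j).ncard < ∑ j, (Function.update T' i M j).ncard := by
    refine Finset.sum_lt_sum (fun j _ => ncard_le_ncard ?_)
      ⟨i, Finset.mem_univ _, by simpa using ncard_lt_ncard hTM⟩
    rcases eq_or_ne j i with rfl | hj
    · simpa using hTM.subset
    · simp [hj]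
  exact (hmax _ (hT'.update hM hTM.subset hdisj)).not_gt hlt

/-- Each `T i` has a convex one-point extension `insert (x i) (T i)`; saturation forces
`x i ∈ ⋂ j ≠ i, T j`. The points `x i` then form the convex set `⋂ i, insert (x i) (T i)`,
and `x i` is extreme in it because all the other points lie in the convex set `T i ∌ x i`. -/
theorem exists_free [Finite E] [Finite ι] (hN : IsConvexGeometry N)
    (hT : IsCriticalFamily N T)
    (hsat : ∀ i, ∀ M ∈ N, T i ⊂ M → (M ∩ ⋂ (j) (_ : j ≠ i), T j).Nonempty) :
    ∃ Y ∈ N, IsFree N Y ∧ Y.ncard = Nat.card ι := by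
  have hwitness : ∀ i, ∃ x, x ∉ T i ∧ insert x (T i) ∈ N ∧ ∀ j ≠ i, x ∈ T j := by
    intro i
    have hout : ∀ x ∈ T i, x ∉ ⋂ (j) (_ : j ≠ i), T j := fun x hx hx' => by
      refine (hT.iInter_eq_empty.subset (mem_iInter.2 fun j => ?_) : x ∈ (∅ : Set E))
      rcases eq_or_ne j i with rfl | hj
      · exact hx
      · exact mem_iInter₂.1 hx' j hj
    have hTu : T i ≠ univ := fun hu =>
      let ⟨x, hx⟩ := hT.iInter_ne_nonempty i
      hout x (hu ▸ mem_univ x) hx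
    obtain ⟨x, hx, hxN⟩ := hN.exists_insert_mem (hT.mem i) hTu
    obtain ⟨y, hy, hyD⟩ := hsat i _ hxN (ssubset_insert hx)
    obtain rfl | hyT := hy
    · exact ⟨y, hx, hxN, mem_iInter₂.1 hyD⟩
    · exact absurd hyD (hout y hyT)
  choose x hxT hxN hxD using hwitness
  have hinj : Injective x := fun i j hij =>
    by_contra fun hne => hxT j (hij ▸ hxD i j (Ne.symm hne))
  have hrange : range x = ⋂ i, insert (x i) (T i) := by
    ext y
    constructor
    · rintro ⟨j, rfl⟩
      refine mem_iInter.2 fun i => ?_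
      rcases eq_or_ne j i with rfl | hji
      · exact mem_insert _ _
      · exact mem_insert_of_mem _ (hxD j i hji.symm)
    · intro hy
      obtain ⟨i, hyT⟩ : ∃ i, y ∉ T i := by
        by_contra! h
        exact (hT.iInter_eq_empty.subset (mem_iInter.2 h) : y ∈ (∅ : Set E))
      exact ⟨i, ((mem_insert_iff.1 (mem_iInter.1 hy i)).resolve_right hyT).symm⟩
  refine ⟨range x, hrange ▸ hN.iInter_mem hxN, ?_, ncard_range_of_injective hinj⟩
  rintro _ ⟨i, rfl⟩ hcl
  refine hxT i (cgClosure_subset (hT.mem i) ?_ hcl)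
  rintro _ ⟨⟨j, rfl⟩, hj⟩
  exact hxD j i fun hij => hj (hij ▸ rfl)

end IsCriticalFamily

def ForcesPoint {E : Type*} (F G : Finset (Set E)) (v : E) : Prop :=
  ∀ H ⊆ F, G ⊆ H → (⋂ S ∈ H, S).Nonempty → ∀ S ∈ H, v ∈ S

namespace IsConvexGeometry

variable {E : Type*} {N : Set (Set E)} [Finite E] {h : ℕ}

theorem helly (hN : IsConvexGeometry N) (hfree : ∀ X ∈ N, IsFree N X → X.ncard ≤ h)
    {A : Finset (Set E)} (hA : ↑A ⊆ N) (hAempty : ⋂ S ∈ A, S = ∅) :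
    ∃ B ⊆ A, B.card ≤ h ∧ ⋂ S ∈ B, S = ∅ := by
  classical
  obtain ⟨B, hmin⟩ := Finset.exists_minimal
    (s := A.powerset.filter fun B => ⋂ S ∈ B, S = ∅) ⟨A, by simpa using hAempty⟩
  obtain ⟨hBA, hB⟩ : B ⊆ A ∧ ⋂ S ∈ B, S = ∅ := by simpa using hmin.prop
  refine ⟨B, hBA, ?_, hB⟩
  have hcrit : IsCriticalFamily N (fun S : B => (S : Set E)) := by
    refine ⟨fun S => hA (hBA S.2), by simpa [iInter_subtype] using hB, fun S => ?_⟩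
    have herase : (⋂ T ∈ B.erase S, T).Nonempty := by
      refine nonempty_iff_ne_empty.2 fun hempty => Finset.notMem_erase S.1 B ?_
      refine hmin.le_of_le ?_ (B.erase_subset S.1) S.2
      exact Finset.mem_filter.2 ⟨Finset.mem_powerset.2 ((B.erase_subset _).trans hBA), hempty⟩
    refine herase.mono fun x hx => ?_
    simp only [mem_iInter] at hx ⊢
    exact fun T hT => hx T (Finset.mem_erase.2 ⟨Subtype.coe_ne_coe.2 hT, T.2⟩)
  obtain ⟨T, hT, hsat⟩ := hcrit.exists_saturated
  obtain ⟨Y, hYN, hYfree, hYcard⟩ := hT.exists_free hN hsat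
  rw [← Nat.card_eq_finsetCard, ← hYcard]
  exact hfree Y hYN hYfree

theorem exists_subfamily_card_eq_disjoint (hN : IsConvexGeometry N)
    (hfree : ∀ X ∈ N, IsFree N X → X.ncard ≤ h) {C : Set E} (hC : C ∈ N)
    {G : Finset (Set E)} (hG : ↑G ⊆ N) (hGne : (⋂ S ∈ G, S).Nonempty)
    (hdisj : Disjoint C (⋂ S ∈ G, S)) (hcard : h - 1 ≤ G.card) :
    ∃ G₂ ⊆ G, G₂.card = h - 1 ∧ Disjoint C (⋂ S ∈ G₂, S) := by
  classical
  obtain ⟨B, hBsub, hBcard, hB⟩ := hN.helly hfree (A := insert C G)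
    (by simpa [insert_subset_iff] using ⟨hC, hG⟩)
    (by rw [Finset.set_biInter_insert]; exact hdisj.inter_eq)
  have hCB : C ∈ B := by
    by_contra hCB
    have hBG : B ⊆ G := fun S hS =>
      (Finset.mem_insert.1 (hBsub hS)).resolve_left fun h => hCB (h ▸ hS)
    exact (hGne.mono (biInter_subset_biInter_left hBG)).ne_empty hB
  have hdisj' : Disjoint C (⋂ S ∈ B.erase C, S) := by
    rw [disjoint_iff_inter_eq_empty, ← hB, ← Finset.set_biInter_insert C (B.erase C) fun S => S,
      Finset.insert_erase hCB]
  have hsub : B.erase C ⊆ G := fun S hS =>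
    (Finset.mem_insert.1 (hBsub (Finset.mem_of_mem_erase hS))).resolve_left
      (Finset.ne_of_mem_erase hS)
  obtain ⟨G₂, hG₂', hG₂, hG₂card⟩ := Finset.exists_subsuperset_card_eq hsub
    (by rw [Finset.card_erase_of_mem hCB]; omega) hcard
  exact ⟨G₂, hG₂, hG₂card, hdisj'.mono_right (biInter_subset_biInter_left hG₂')⟩

/-- Along a ranking `r` with convex initial segments, take `G` maximising the least rank of a
point of `⋂ G`, and `v` the point of least rank. If some `H ⊇ G` with a common point omitted
`v`, then `⋂ H` would miss the convex set of points of rank at most `r v`, and by Helly so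
would `⋂ G₂` for some `G₂ ⊆ H` of size `h - 1`, contradicting the maximality of `G`. -/
theorem exists_forcesPoint (hN : IsConvexGeometry N)
    (hfree : ∀ X ∈ N, IsFree N X → X.ncard ≤ h) {F : Finset (Set E)} (hF : ↑F ⊆ N)
    (hex : ∃ G ⊆ F, G.card = h - 1 ∧ (⋂ S ∈ G, S).Nonempty) :
    ∃ G ⊆ F, G.card = h - 1 ∧ ∃ v ∈ ⋂ S ∈ G, S, ForcesPoint F G v := by
  classical
  obtain ⟨r, hr_inj, hr⟩ := hN.exists_injective_rank
  have hcand {G} (hGF : G ⊆ F) (hGcard : G.card = h - 1) (hGne : (⋂ S ∈ G, S).Nonempty) :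
      G ∈ (F.powersetCard (h - 1)).filter fun G => (⋂ S ∈ G, S).Nonempty :=
    Finset.mem_filter.2 ⟨Finset.mem_powersetCard.2 ⟨hGF, hGcard⟩, hGne⟩
  obtain ⟨G, hGmem, hGmax⟩ := Finset.exists_max_image _ (fun G => sInf (r '' ⋂ S ∈ G, S))
    (let ⟨G, hGF, hGcard, hGne⟩ := hex; ⟨G, hcand hGF hGcard hGne⟩)
  obtain ⟨⟨hGF, hGcard⟩, hGne⟩ := Finset.mem_filter.1 hGmem |>.imp_left Finset.mem_powersetCard.1
  obtain ⟨v, hv, hvm⟩ := Nat.sInf_mem (hGne.image r)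
  refine ⟨G, hGF, hGcard, v, hv, fun H hHF hGH hHne => ?_⟩
  by_contra! hvH
  obtain ⟨S, hS, hvS⟩ := hvH
  have hdisj : Disjoint {x | r x < sInf (r '' ⋂ S ∈ G, S) + 1} (⋂ S ∈ H, S) := by
    refine disjoint_left.2 fun x hxlt hxH => hvS ?_
    have hle : sInf (r '' ⋂ S ∈ G, S) ≤ r x :=
      Nat.sInf_le ⟨x, biInter_subset_biInter_left hGH hxH, rfl⟩
    have hxv : x = v := hr_inj (by rw [mem_ofPred] at hxlt; omega)
    exact hxv ▸ mem_iInter₂.1 hxH S hS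
  obtain ⟨G₂, hG₂H, hG₂card, hG₂⟩ := hN.exists_subfamily_card_eq_disjoint hfree (hr _)
    (fun S hS => hF (hHF hS)) hHne hdisj (hGcard ▸ Finset.card_le_card hGH)
  have hG₂ne : (⋂ S ∈ G₂, S).Nonempty := hHne.mono (biInter_subset_biInter_left hG₂H)
  have hle : sInf (r '' ⋂ S ∈ G₂, S) ≤ sInf (r '' ⋂ S ∈ G, S) :=
    hGmax G₂ (hcand (hG₂H.trans hHF) hG₂card hG₂ne)
  obtain ⟨x, hx, hxm⟩ := Nat.sInf_mem (hG₂ne.image r)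
  exact disjoint_left.1 hG₂ (show r x < sInf (r '' ⋂ S ∈ G, S) + 1 by omega) hx

end IsConvexGeometry

def Pierceable {E : Type*} (F : Finset (Set E)) (m : ℕ) : Prop :=
  ∃ P : Finset E, P.card ≤ m ∧ ∀ S ∈ F, ∃ x ∈ P, x ∈ S

namespace Pierceable

variable {E : Type*} {F F' : Finset (Set E)} {m n : ℕ}

theorem mono (hF : Pierceable F m) (hF'F : F' ⊆ F) (hmn : m ≤ n) : Pierceable F' n :=
  let ⟨P, hPcard, hP⟩ := hF
  ⟨P, hPcard.trans hmn, fun S hS => hP S (hF'F hS)⟩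

theorem union [DecidableEq (Set E)] (hF : Pierceable F m) (hF' : Pierceable F' n) :
    Pierceable (F ∪ F') (m + n) := by
  classical
  obtain ⟨P, hPcard, hP⟩ := hF
  obtain ⟨P', hP'card, hP'⟩ := hF'
  refine ⟨P ∪ P', (Finset.card_union_le _ _).trans (add_le_add hPcard hP'card), fun S hS => ?_⟩
  rcases Finset.mem_union.1 hS with hS | hS
  · obtain ⟨x, hx, hxS⟩ := hP S hS
    exact ⟨x, Finset.mem_union_left _ hx, hxS⟩
  · obtain ⟨x, hx, hxS⟩ := hP' S hS
    exact ⟨x, Finset.mem_union_right _ hx, hxS⟩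

theorem of_nonempty (hne : ∀ S ∈ F, S.Nonempty) : Pierceable F F.card := by
  classical
  refine ⟨F.attach.image fun S => (hne S.1 S.2).some, Finset.card_image_le.trans_eq F.card_attach,
    fun S hS => ⟨_, Finset.mem_image_of_mem _ (F.mem_attach ⟨S, hS⟩), (hne S hS).some_mem⟩⟩

theorem of_biInter_nonempty (hF : (⋂ S ∈ F, S).Nonempty) : Pierceable F 1 :=
  let ⟨x, hx⟩ := hF
  ⟨{x}, (Finset.card_singleton x).le,
    fun S hS => ⟨x, Finset.mem_singleton_self x, mem_iInter₂.1 hx S hS⟩⟩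

theorem succ (hF' : Pierceable F' m) {v : E}
    (hv : ∀ S ∈ F, S ∉ F' → v ∈ S) : Pierceable F (m + 1) := by
  classical
  obtain ⟨P, hPcard, hP⟩ := hF'
  refine ⟨insert v P, (Finset.card_insert_le v P).trans (by omega), fun S hS => ?_⟩
  by_cases hSF' : S ∈ F'
  · obtain ⟨x, hx, hxS⟩ := hP S hSF'
    exact ⟨x, Finset.mem_insert_of_mem hx, hxS⟩
  · exact ⟨v, Finset.mem_insert_self v P, hv S hS hSF'⟩

end Pierceable

def HasPQProperty {E : Type*} (F : Finset (Set E)) (p q : ℕ) : Prop :=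
  ∀ G ⊆ F, G.card = p → ∃ H ⊆ G, H.card = q ∧ (⋂ S ∈ H, S).Nonempty

namespace HasPQProperty

variable {E : Type*} {F G F' : Finset (Set E)} {p q : ℕ} {v : E}

theorem exists_subfamily (hP : HasPQProperty F p q) (hpF : p ≤ F.card) {d : ℕ} (hdq : d ≤ q) :
    ∃ G ⊆ F, G.card = d ∧ (⋂ S ∈ G, S).Nonempty := by
  obtain ⟨G₀, hG₀F, hG₀card⟩ := Finset.exists_subset_card_eq hpF
  obtain ⟨H, hHG₀, hHcard, hHne⟩ := hP G₀ hG₀F hG₀card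
  obtain ⟨G, hGH, hGcard⟩ := Finset.exists_subset_card_eq (hHcard ▸ hdq)
  exact ⟨G, hGH.trans (hHG₀.trans hG₀F), hGcard, hHne.mono (biInter_subset_biInter_left hGH)⟩

theorem exists_subfamily_of_forcesPoint (hP : HasPQProperty F p q) (hforce : ForcesPoint F G v)
    {R : Finset (Set E)} (hGF : G ⊆ F) (hRF : R ⊆ F) (hGR : Disjoint G R)
    (hcard : G.card + R.card = p) (hGq : G.card ≤ q)
    (hmiss : ∀ H ⊆ R, H.card = q - G.card → ∃ S ∈ H, v ∉ S) :
    ∃ H ⊆ R, q - G.card < H.card ∧ (⋂ S ∈ H, S).Nonempty := by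
  classical
  obtain ⟨H₀, hH₀, hH₀card, hH₀ne⟩ := hP (G ∪ R) (Finset.union_subset hGF hRF)
    (by rw [Finset.card_union_of_disjoint hGR, hcard])
  refine ⟨H₀ ∩ R, Finset.inter_subset_right, ?_,
    hH₀ne.mono (biInter_subset_biInter_left Finset.inter_subset_left)⟩
  by_contra! hsmall
  have hsplit : H₀.card ≤ (H₀ ∩ G).card + (H₀ ∩ R).card := by
    rw [← Finset.card_union_of_disjoint
      (hGR.mono Finset.inter_subset_right Finset.inter_subset_right),
      ← Finset.inter_union_distrib_left]
    exact Finset.card_le_card (Finset.subset_inter subset_rfl hH₀)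
  have hHG : (H₀ ∩ G).card ≤ G.card := Finset.card_le_card Finset.inter_subset_right
  have hGH₀ : G ⊆ H₀ := by
    have hGH₀ : H₀ ∩ G = G := Finset.eq_of_subset_of_card_le Finset.inter_subset_right (by omega)
    exact hGH₀ ▸ Finset.inter_subset_left
  obtain ⟨S, hS, hvS⟩ := hmiss (H₀ ∩ R) Finset.inter_subset_right (by omega)
  exact hvS (hforce H₀ (hH₀.trans (Finset.union_subset hGF hRF)) hGH₀ hH₀ne S
    (Finset.mem_of_mem_inter_left hS))

theorem of_forcesPoint (hP : HasPQProperty F p q) (hforce : ForcesPoint F G v)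
    (hGF : G ⊆ F) (hvG : v ∈ ⋂ S ∈ G, S) (hF'F : F' ⊆ F) (hF' : ∀ S ∈ F', v ∉ S)
    (hGp : G.card ≤ p) (hGq : G.card < q) :
    HasPQProperty F' (p - G.card) (q - G.card + 1) := by
  intro G' hG'F' hG'card
  have hGG' : Disjoint G G' := Finset.disjoint_left.2 fun S hSG hSG' =>
    hF' S (hG'F' hSG') (mem_iInter₂.1 hvG S hSG)
  obtain ⟨H, hHG', hHcard, hHne⟩ := hP.exists_subfamily_of_forcesPoint hforce hGF
    (hG'F'.trans hF'F) hGG' (by omega) hGq.le fun H hHG' hHcard => by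
      obtain ⟨S, hS⟩ := Finset.card_pos.1 (by omega : 0 < H.card)
      exact ⟨S, hS, hF' S (hG'F' (hHG' hS))⟩
  obtain ⟨H', hH'H, hH'card⟩ := Finset.exists_subset_card_eq (Nat.succ_le_of_lt hHcard)
  exact ⟨H', hH'H.trans hHG', hH'card, hHne.mono (biInter_subset_biInter_left hH'H)⟩

theorem pierceable_of_forcesPoint (hP : HasPQProperty F p q) (hforce : ForcesPoint F G v)
    (hGF : G ⊆ F) (hvG : v ∈ ⋂ S ∈ G, S) (hF'F : F' ⊆ F) (hF' : ∀ S ∈ F', v ∉ S)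
    (hne : ∀ S ∈ F', S.Nonempty) (hpF : p ≤ F.card) (hGq : G.card ≤ q)
    (hlow : p - q < F'.card) (hup : F'.card + G.card ≤ p) : Pierceable F' (p - q) := by
  classical
  have hGF' : Disjoint G F' := Finset.disjoint_left.2 fun S hSG hSF' =>
    hF' S hSF' (mem_iInter₂.1 hvG S hSG)
  obtain ⟨fill, hfill, hfillcard⟩ := Finset.exists_subset_card_eq (s := F \ (F' ∪ G))
    (n := p - F'.card - G.card) (by
      rw [Finset.card_sdiff_of_subset (Finset.union_subset hF'F hGF),
        Finset.card_union_of_disjoint hGF'.symm]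
      omega)
  have hfill' : Disjoint (F' ∪ G) fill :=
    Finset.disjoint_of_subset_right hfill Finset.disjoint_sdiff
  obtain ⟨H, hHR, hHcard, hHne⟩ := hP.exists_subfamily_of_forcesPoint (R := F' ∪ fill) hforce hGF
    (Finset.union_subset hF'F (hfill.trans Finset.sdiff_subset))
    (Finset.disjoint_union_right.2 ⟨hGF', hfill'.mono_left Finset.subset_union_right⟩)
    (by rw [Finset.card_union_of_disjoint (hfill'.mono_left Finset.subset_union_left)]; omega)
    hGq fun H hHR hHcard => by
      have hH := H.card_le_card_sdiff_add_card (t := fill)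
      obtain ⟨S, hS⟩ := Finset.card_pos.1 (by omega : 0 < (H \ fill).card)
      obtain ⟨hSH, hSfill⟩ := Finset.mem_sdiff.1 hS
      exact ⟨S, hSH, hF' S ((Finset.mem_union.1 (hHR hSH)).resolve_right hSfill)⟩
  have hHF' : H \ fill ⊆ F' ∩ H := fun S hS =>
    have ⟨hSH, hSfill⟩ := Finset.mem_sdiff.1 hS
    Finset.mem_inter.2 ⟨(Finset.mem_union.1 (hHR hSH)).resolve_right hSfill, hSH⟩
  have hrest : (F' \ H).card + 1 ≤ p - q := by
    have h₁ := H.card_le_card_sdiff_add_card (t := fill)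
    have h₂ := Finset.card_le_card hHF'
    have h₃ := Finset.card_sdiff_add_card_inter F' H
    omega
  refine ((Pierceable.of_nonempty fun S hS => hne S (Finset.sdiff_subset hS)).union
    (Pierceable.of_biInter_nonempty hHne)).mono
    (Finset.subset_union_left.trans Finset.sdiff_union_self_eq_union.superset) hrest

end HasPQProperty

theorem admissible_step {h p q : ℕ} (hpq : q < p) (hadm : (h - 2) * p < (h - 1) * (q - 1)) :
    2 ≤ h ∧ 2 * (h - 1) ≤ q ∧
      (h - 2) * (p - (h - 1)) < (h - 1) * (q - (h - 1) + 1 - 1) := by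
  have hh : 2 ≤ h := by
    by_contra! hh
    rw [show h - 1 = 0 by omega, zero_mul] at hadm
    exact Nat.not_lt_zero _ hadm
  have hq : 1 ≤ q := by
    by_contra! hq
    rw [show q - 1 = 0 by omega, mul_zero] at hadm
    exact Nat.not_lt_zero _ hadm
  obtain ⟨d, rfl⟩ : ∃ d, h = d + 2 := ⟨h - 2, by omega⟩
  obtain ⟨c, rfl⟩ : ∃ c, q = c + 1 := ⟨q - 1, by omega⟩
  rw [show d + 2 - 2 = d by omega, show d + 2 - 1 = d + 1 by omega, Nat.add_sub_cancel] at hadm ⊢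
  have hdc : 2 * d < c := by nlinarith [Nat.mul_le_mul_left d (show c + 2 ≤ p by omega)]
  refine ⟨by omega, by omega, ?_⟩
  obtain ⟨a, rfl⟩ : ∃ a, p = c + 2 + a := ⟨p - (c + 2), by omega⟩
  obtain ⟨b, rfl⟩ : ∃ b, c = 2 * d + 1 + b := ⟨c - (2 * d + 1), by omega⟩
  rw [show 2 * d + 1 + b + 2 + a - (d + 1) = d + b + 2 + a by omega,
    show 2 * d + 1 + b + 1 - (d + 1) = d + 1 + b by omega]
  nlinarith

namespace IsConvexGeometry

variable {E : Type*} {N : Set (Set E)} [Finite E] {h : ℕ}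

theorem biInter_nonempty_of_hasPQProperty_self (hN : IsConvexGeometry N)
    (hfree : ∀ X ∈ N, IsFree N X → X.ncard ≤ h) {F : Finset (Set E)} (hF : ↑F ⊆ N) {p : ℕ}
    (hP : HasPQProperty F p p) (hhp : h ≤ p) (hpF : p ≤ F.card) : (⋂ S ∈ F, S).Nonempty := by
  by_contra hempty
  obtain ⟨B, hBF, hBcard, hB⟩ := hN.helly hfree hF (not_nonempty_iff_eq_empty.1 hempty)
  obtain ⟨G, hBG, hGF, hGcard⟩ := Finset.exists_subsuperset_card_eq hBF (hBcard.trans hhp) hpF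
  obtain ⟨H, hHG, hHcard, hHne⟩ := hP G hGF hGcard
  obtain rfl := Finset.eq_of_subset_of_card_le hHG (hGcard.trans hHcard.symm).le
  exact (hHne.mono (biInter_subset_biInter_left hBG)).ne_empty hB

theorem pierceable_of_hasPQProperty (hN : IsConvexGeometry N)
    (hfree : ∀ X ∈ N, IsFree N X → X.ncard ≤ h) {p q : ℕ} (hq : h ≤ q) (hpq : q ≤ p)
    (hadm : (h - 2) * p < (h - 1) * (q - 1)) {F : Finset (Set E)} (hF : ↑F ⊆ N)
    (hne : ∀ S ∈ F, S.Nonempty) (hpF : p ≤ F.card) (hP : HasPQProperty F p q) :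
    Pierceable F (p - q + 1) := by
  classical
  induction p using Nat.strong_induction_on generalizing q F with
  | _ p ih =>
  obtain rfl | hlt := hpq.eq_or_lt
  · simpa using Pierceable.of_biInter_nonempty
      (hN.biInter_nonempty_of_hasPQProperty_self hfree hF hP hq hpF)
  obtain ⟨hh, hhq, hadm'⟩ := admissible_step hlt hadm
  obtain ⟨G, hGF, hGcard, v, hvG, hforce⟩ :=
    hN.exists_forcesPoint hfree hF (hP.exists_subfamily hpF (by omega))
  set F' := F.filter (v ∉ ·)
  have hF'F : F' ⊆ F := Finset.filter_subset _ _
  have hF' : ∀ S ∈ F', v ∉ S := fun S hS => (Finset.mem_filter.1 hS).2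
  have hne' : ∀ S ∈ F', S.Nonempty := fun S hS => hne S (hF'F hS)
  refine Pierceable.succ (F' := F') ?_ fun S hS hSF' => by simpa [F', hS] using hSF'
  rcases le_or_gt F'.card (p - q) with hsmall | hsmall
  · exact (Pierceable.of_nonempty hne').mono subset_rfl hsmall
  rcases le_or_gt (F'.card + (h - 1)) p with hmed | hlarge
  · exact hP.pierceable_of_forcesPoint hforce hGF hvG hF'F hF' hne' hpF (by omega) hsmall
      (hGcard ▸ hmed)
  · have hP' := hP.of_forcesPoint hforce hGF hvG hF'F hF' (by omega) (by omega)
    rw [hGcard] at hP'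
    exact (ih (p - (h - 1)) (by omega) (by omega) (by omega) hadm' (fun S hS => hF (hF'F hS)) hne'
      (by omega) hP').mono subset_rfl (by omega)

end IsConvexGeometry

theorem stmt_14 {E : Type*} [Fintype E] (N : Set (Set E))
    (hN : IsConvexGeometry N) (h p q : ℕ)
    (hmaxfree : (∃ X ∈ N, IsFree N X ∧ X.ncard = h) ∧
      ∀ X ∈ N, IsFree N X → X.ncard ≤ h)
    (hq : h ≤ q) (hpq : q ≤ p)
    (hadm : (h - 2) * p < (h - 1) * (q - 1))
    (F : Finset (Set E)) (hFN : ↑F ⊆ N) (hne : ∀ S ∈ F, S.Nonempty)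
    (hcard : p ≤ F.card)
    (hP : ∀ G ⊆ F, G.card = p → ∃ H ⊆ G, H.card = q ∧ (⋂ S ∈ H, S).Nonempty) :
    ∃ P : Finset E, P.card ≤ p - q + 1 ∧ ∀ S ∈ F, ∃ x ∈ P, x ∈ S :=
  hN.pierceable_of_hasPQProperty hmaxfree.2 hq hpq hadm hFN hne hcard hP
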